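/- Let φ be a Θ-invariant pure state of the spin-1/2 chain algebra 𝔄 and Λ a subset of ℤ. Then Haag duality holds for Λ, i.e. π_φ(𝔄_Λ)'' = (π_φ(𝔄_{Λ^c}))', if and only if π_{φ₊}((𝔄_Λ)₊)'' = (π_{φ₊}((𝔄_{Λ^c})₊))' holds on the GNS space of the restriction φ₊ of φ to the even part (𝔄)₊. -/

import Mathlib

/-!
Locality gives `π(𝔄_{Λᶜ}) ⊆ π(𝔄_Λ)'`, so Haag duality says exactly that the commutants
`π(𝔄_Λ)'` and `π(𝔄_{Λᶜ})'` commute with each other; likewise for the even parts in `π_{φ₊}`.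

Θ-invariance of `φ` gives a self-adjoint unitary `U` with `UΩ = Ω` and `U π(a) U = π(Θ a)`, and
`π_{φ₊}` is `π ∘ e` restricted to the range of `P = (1 + U)/2`, through an isometry `W` with
`W W* = P`. Conjugation by `W` identifies `π_{φ₊}((𝔄_Λ)₊)'` with the operators `T = PTP`
commuting with the `U`-even part of `π(𝔄_Λ)`.

The two conditions are compared using odd self-adjoint unitaries `v = π(σ_x^{(j)})`, `j ∈ Λ`
(and `v'` with `j ∈ Λᶜ`). Such a `T` extends to `T + vTv ∈ π(𝔄_Λ)'`, which commutes with `U` and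
compresses back to `T`. Conversely every `T ∈ π(𝔄_{Λᶜ})'` splits as `S₀ + S₁ v` with `U`-even
`S₀, S₁ ∈ π(𝔄_{Λᶜ})'`, and `U`-even elements of the two commutants commute on `PH` by the even
condition and on `(1 - P)H = v(PH)` after conjugating by `v`. If `Λ` or `Λᶜ` is empty, purity
makes both conditions hold.
-/

noncomputable section

open scoped ComplexOrder

local notation "⟪" x ", " y "⟫" => @inner ℂ _ _ x y

/-- the Pauli matrix σ_z; conjugation by it implements the parity automorphism on one site -/
def pauliZ : Matrix (Fin 2) (Fin 2) ℂ := !![1, 0; 0, -1]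

open Set

theorem centralizer_centralizer_eq_centralizer_iff {M : Type*} [Mul M] {s t : Set M}
    (hts : t ⊆ centralizer s) :
    centralizer (centralizer s) = centralizer t ↔
      ∀ x ∈ centralizer t, ∀ y ∈ centralizer s, Commute y x := by
  refine ⟨fun h x hx y hy => (h ▸ hx : x ∈ centralizer (centralizer s)) y hy, fun H => ?_⟩
  exact (centralizer_subset hts).antisymm fun x hx => mem_centralizer_iff.2 fun y hy => H x hx y hy

theorem forall_commute_image_iff {M N : Type*} [Mul M] [Mul N] {f : M → N}
    (hf : Function.Injective f) (hmul : ∀ x y, f (x * y) = f x * f y) {s t : Set M} :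
    (∀ x ∈ f '' s, ∀ y ∈ f '' t, Commute y x) ↔ ∀ x ∈ s, ∀ y ∈ t, Commute y x := by
  simp only [forall_mem_image, Commute, SemiconjBy, ← hmul, hf.eq_iff]

lemma IsSelfAdjoint.eq_of_mul_eq {R : Type*} [Mul R] [StarMul R] {p q : R}
    (hp : IsSelfAdjoint p) (hq : IsSelfAdjoint q) (hqp : q * p = p) (hpq : p * q = q) : p = q := by
  rw [← hp.star_eq, ← hqp, star_mul, hp.star_eq, hq.star_eq, hpq]

section ParityGrading

variable {𝕜 B : Type*} [Field 𝕜] [Ring B] [Algebra 𝕜 B] {U : B}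

variable (𝕜) in
def evenPart (U T : B) : B := (2⁻¹ : 𝕜) • (T + U * T * U)

variable (𝕜) in
def oddPart (U T : B) : B := (2⁻¹ : 𝕜) • (T - U * T * U)

variable (𝕜) in
def evenProj (U : B) : B := (2⁻¹ : 𝕜) • (1 + U)

def IsOddInvolution (U v : B) : Prop := v * v = 1 ∧ U * v = -(v * U)

variable (𝕜) in
/-- For `S = π(𝔄_Λ)` this is the commutant of `π_{φ₊}((𝔄_Λ)₊)`, transported to the range of
`evenProj 𝕜 U` inside the GNS space of `φ`. -/
def evenCommutant (U : B) (S : Set B) : Set B :=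
  {R | evenProj 𝕜 U * R * evenProj 𝕜 U = R} ∩ centralizer {a ∈ S | Commute U a}

lemma inv_two_smul_add_self [NeZero (2 : 𝕜)] (x : B) : (2⁻¹ : 𝕜) • (x + x) = x := by
  rw [← two_smul 𝕜, smul_smul, inv_mul_cancel₀ two_ne_zero, one_smul]

lemma evenPart_add_oddPart [NeZero (2 : 𝕜)] (U T : B) :
    evenPart 𝕜 U T + oddPart 𝕜 U T = T := by
  rw [evenPart, oddPart, ← smul_add, add_add_sub_cancel, inv_two_smul_add_self]

lemma commute_evenPart (hU : U * U = 1) (T : B) : Commute U (evenPart 𝕜 U T) := by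
  refine Commute.smul_right ?_ _
  have h : U * (U * T * U) = T * U := by rw [← mul_assoc, ← mul_assoc, hU, one_mul]
  have h' : U * T * U * U = U * T := by rw [mul_assoc, hU, mul_one]
  rw [Commute, SemiconjBy, mul_add, add_mul, h, h', add_comm]

lemma mul_oddPart (hU : U * U = 1) (T : B) : U * oddPart 𝕜 U T = -(oddPart 𝕜 U T * U) := by
  have h : U * (U * T * U) = T * U := by rw [← mul_assoc, ← mul_assoc, hU, one_mul]
  have h' : U * T * U * U = U * T := by rw [mul_assoc, hU, mul_one]
  rw [oddPart, mul_smul_comm, smul_mul_assoc, ← smul_neg, mul_sub, sub_mul, h, h', neg_sub]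

lemma mul_evenProj (hU : U * U = 1) : U * evenProj 𝕜 U = evenProj 𝕜 U := by
  rw [evenProj, mul_smul_comm, mul_add, mul_one, hU, add_comm]

lemma evenProj_mul (hU : U * U = 1) : evenProj 𝕜 U * U = evenProj 𝕜 U := by
  rw [evenProj, smul_mul_assoc, add_mul, one_mul, hU, add_comm]

lemma evenProj_mul_self [NeZero (2 : 𝕜)] (hU : U * U = 1) :
    evenProj 𝕜 U * evenProj 𝕜 U = evenProj 𝕜 U := by
  conv_lhs => enter [1]; rw [evenProj]
  rw [smul_mul_assoc, add_mul, one_mul, mul_evenProj hU, inv_two_smul_add_self]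

lemma evenProj_mul_eq_zero {X : B} (hX : U * X = -X) : evenProj 𝕜 U * X = 0 := by
  rw [evenProj, smul_mul_assoc, add_mul, one_mul, hX, add_neg_cancel, smul_zero]

lemma Commute.evenProj {x : B} (h : Commute U x) : Commute (evenProj 𝕜 U) x :=
  ((Commute.one_left x).add_left h).smul_left _

lemma IsOddInvolution.mul_evenProj_mul [NeZero (2 : 𝕜)] {v : B} (hv : IsOddInvolution U v) :
    v * evenProj 𝕜 U * v = 1 - evenProj 𝕜 U := by
  have hvUv : v * U * v = -U := by
    rw [mul_assoc, hv.2, mul_neg, ← mul_assoc, hv.1, one_mul]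
  rw [eq_sub_iff_add_eq, evenProj, mul_smul_comm, smul_mul_assoc, mul_add, add_mul, mul_one, hv.1,
    hvUv, ← smul_add, add_add_add_comm, neg_add_cancel, add_zero, inv_two_smul_add_self]

lemma IsOddInvolution.mul_eq_neg {v : B} (hv : IsOddInvolution U v) : v * U = -(U * v) := by
  rw [hv.2, neg_neg]

lemma IsOddInvolution.commute_mul {v X : B} (hv : IsOddInvolution U v) (hX : U * X = -(X * U)) :
    Commute U (v * X) := by
  rw [Commute, SemiconjBy, ← mul_assoc, hv.2, neg_mul, mul_assoc, hX, mul_neg, neg_neg, mul_assoc]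

lemma IsOddInvolution.commute_mul_right {v X : B} (hv : IsOddInvolution U v)
    (hX : U * X = -(X * U)) : Commute U (X * v) := by
  rw [Commute, SemiconjBy, ← mul_assoc, hX, neg_mul, mul_assoc, mul_assoc, hv.2, mul_neg, neg_neg]

lemma IsOddInvolution.commute_conj {v a : B} (hv : IsOddInvolution U v) (ha : Commute U a) :
    Commute U (v * a * v) := by
  rw [mul_assoc]
  refine hv.commute_mul ?_
  rw [← mul_assoc, ha.eq, mul_assoc, hv.2, mul_neg, ← mul_assoc]

lemma Commute.conj_of_mul_self {u a T : B} (hu : u * u = 1) (h : Commute (u * a * u) T) :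
    Commute a (u * T * u) :=
  calc a * (u * T * u) = (u * u) * a * (u * T * u) := by rw [hu, one_mul]
    _ = u * (u * a * u * T) * u := by noncomm_ring
    _ = u * (T * (u * a * u)) * u := by rw [h.eq]
    _ = u * T * u * a * (u * u) := by noncomm_ring
    _ = u * T * u * a := by rw [hu, mul_one]

lemma conj_mem_centralizer (hU : U * U = 1) {S : Set B} (hS : ∀ a ∈ S, U * a * U ∈ S) {T : B}
    (hT : T ∈ centralizer S) : U * T * U ∈ centralizer S := by
  rw [mem_centralizer_iff] at hT ⊢
  exact fun a ha => (Commute.conj_of_mul_self hU (hT _ (hS a ha))).eq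

lemma evenPart_mem_centralizer (hU : U * U = 1) {S : Set B} (hS : ∀ a ∈ S, U * a * U ∈ S) {T : B}
    (hT : T ∈ centralizer S) : evenPart 𝕜 U T ∈ centralizer S := by
  have hUTU : U * T * U ∈ Subalgebra.centralizer 𝕜 S := conj_mem_centralizer hU hS hT
  exact Subalgebra.smul_mem _ (add_mem (show T ∈ Subalgebra.centralizer 𝕜 S from hT) hUTU) _

lemma oddPart_mem_centralizer (hU : U * U = 1) {S : Set B} (hS : ∀ a ∈ S, U * a * U ∈ S) {T : B}
    (hT : T ∈ centralizer S) : oddPart 𝕜 U T ∈ centralizer S := by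
  have hUTU : U * T * U ∈ Subalgebra.centralizer 𝕜 S := conj_mem_centralizer hU hS hT
  exact Subalgebra.smul_mem _ (sub_mem (show T ∈ Subalgebra.centralizer 𝕜 S from hT) hUTU) _

theorem mem_centralizer_of_mem_centralizer_even [NeZero (2 : 𝕜)] (hU : U * U = 1)
    {A : Subalgebra 𝕜 B} (hA : ∀ a ∈ A, U * a * U ∈ A) {v : B} (hvA : v ∈ A)
    (hv : IsOddInvolution U v) {T : B} (hT : T ∈ centralizer {a ∈ A | Commute U a})
    (hvT : Commute v T) : T ∈ centralizer (A : Set B) := by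
  rw [mem_centralizer_iff] at hT ⊢
  intro a ha
  have heven : Commute (evenPart 𝕜 U a) T :=
    hT _ ⟨A.smul_mem (A.add_mem ha (hA a ha)) _, commute_evenPart hU a⟩
  have hodd : Commute (v * oddPart 𝕜 U a) T :=
    hT _ ⟨A.mul_mem hvA (A.smul_mem (A.sub_mem ha (hA a ha)) _), hv.commute_mul (mul_oddPart hU a)⟩
  have hdecomp : a = evenPart 𝕜 U a + v * (v * oddPart 𝕜 U a) := by
    rw [← mul_assoc, hv.1, one_mul, evenPart_add_oddPart]
  rw [hdecomp]
  exact (heven.add_left (hvT.mul_left hodd)).eq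

lemma conj_mem_centralizer_even {A : Subalgebra 𝕜 B} {v : B} (hvA : v ∈ A)
    (hv : IsOddInvolution U v) {T : B} (hT : T ∈ centralizer {a ∈ A | Commute U a}) :
    v * T * v ∈ centralizer {a ∈ A | Commute U a} := by
  rw [mem_centralizer_iff] at hT ⊢
  rintro a ⟨haA, hUa⟩
  exact (Commute.conj_of_mul_self hv.1
    (hT (v * a * v) ⟨A.mul_mem (A.mul_mem hvA haA) hvA, hv.commute_conj hUa⟩)).eq

lemma mul_eq_self_of_evenProj_mul_mul_eq (hU : U * U = 1) {T : B}
    (hT : evenProj 𝕜 U * T * evenProj 𝕜 U = T) : U * T = T ∧ T * U = T :=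
  ⟨by rw [← hT, ← mul_assoc, ← mul_assoc, mul_evenProj hU],
    by rw [← hT, mul_assoc, evenProj_mul hU]⟩

theorem exists_mem_centralizer_evenProj_mul_mul_eq [NeZero (2 : 𝕜)] (hU : U * U = 1)
    {A : Subalgebra 𝕜 B} (hA : ∀ a ∈ A, U * a * U ∈ A) {v : B} (hvA : v ∈ A)
    (hv : IsOddInvolution U v) {T : B} (hT : T ∈ evenCommutant 𝕜 U A) :
    ∃ T' ∈ centralizer (A : Set B), Commute U T' ∧ evenProj 𝕜 U * T' * evenProj 𝕜 U = T := by
  obtain ⟨hPT, hTA⟩ := hT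
  obtain ⟨hUT, hTU⟩ := mul_eq_self_of_evenProj_mul_mul_eq hU hPT
  have hUvTv : U * (v * T * v) = -(v * T * v) := by
    rw [← mul_assoc, ← mul_assoc, hv.2, neg_mul, neg_mul, mul_assoc v U, hUT]
  have hvTvU : v * T * v * U = -(v * T * v) := by
    rw [mul_assoc, hv.mul_eq_neg, mul_neg, ← mul_assoc, mul_assoc v T U, hTU]
  refine ⟨T + v * T * v, mem_centralizer_of_mem_centralizer_even hU hA hvA hv ?_ ?_, ?_, ?_⟩
  · exact (Subalgebra.centralizer 𝕜 _).add_mem hTA (conj_mem_centralizer_even hvA hv hTA)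
  · have h1 : v * (v * T * v) = T * v := by rw [← mul_assoc, ← mul_assoc, hv.1, one_mul]
    have h2 : v * T * v * v = v * T := by rw [mul_assoc, hv.1, mul_one]
    rw [Commute, SemiconjBy, mul_add, add_mul, h1, h2, add_comm]
  · rw [Commute, SemiconjBy, mul_add, add_mul, hUT, hTU, hUvTv, hvTvU]
  · rw [mul_add, add_mul, hPT, evenProj_mul_eq_zero hUvTv, zero_mul, add_zero]

lemma Commute.compress {p x y : B} (hxy : Commute x y) (hx : Commute p x) (hy : Commute p y) :
    Commute (p * x * p) (p * y * p) := by
  have hpy : Commute p (p * y * p) := ((Commute.refl p).mul_right hy).mul_right (Commute.refl p)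
  have hxy' : Commute x (p * y * p) := (hx.symm.mul_right hxy).mul_right hx.symm
  exact (hpy.mul_left hxy').mul_left hpy

lemma evenProj_mul_mul_evenProj_mem [NeZero (2 : 𝕜)] (hU : U * U = 1) {S : Set B} {x : B}
    (hx : x ∈ centralizer S) : evenProj 𝕜 U * x * evenProj 𝕜 U ∈ evenCommutant 𝕜 U S := by
  refine ⟨?_, ?_⟩
  · show _ = _
    rw [show ∀ p : B, p * (p * x * p) * p = (p * p) * x * (p * p) by intro p; noncomm_ring,
      evenProj_mul_self hU]
  · rw [mem_centralizer_iff]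
    rintro a ⟨haS, hUa⟩
    have hPa := hUa.evenProj (𝕜 := 𝕜)
    exact ((hPa.symm.mul_right (hx a haS)).mul_right hPa.symm).eq

theorem exists_eq_add_mul_of_mem_centralizer [NeZero (2 : 𝕜)] (hU : U * U = 1) {S : Set B}
    (hS : ∀ a ∈ S, U * a * U ∈ S) {w : B} (hwS : w ∈ centralizer S) (hw : IsOddInvolution U w)
    {T : B} (hT : T ∈ centralizer S) :
    ∃ T₀ ∈ {R ∈ centralizer S | Commute U R}, ∃ T₁ ∈ {R ∈ centralizer S | Commute U R},
      T = T₀ + T₁ * w :=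
  ⟨evenPart 𝕜 U T, ⟨evenPart_mem_centralizer hU hS hT, commute_evenPart hU T⟩,
    oddPart 𝕜 U T * w, ⟨Set.mul_mem_centralizer (oddPart_mem_centralizer hU hS hT) hwS,
      hw.commute_mul_right (mul_oddPart hU T)⟩,
    by rw [mul_assoc, hw.1, mul_one, evenPart_add_oddPart]⟩

lemma mul_mul_mul_of_idempotent {p x y : B} (hp : p * p = p) (hy : Commute p y) :
    x * p * (y * p) = x * y * p := by
  rw [mul_assoc x, ← mul_assoc p, hy.eq, mul_assoc y, hp, ← mul_assoc]

theorem commute_of_forall_commute_evenCommutant [NeZero (2 : 𝕜)] (hU : U * U = 1)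
    {A A' : Subalgebra 𝕜 B} (hAA' : ∀ a ∈ A, a ∈ centralizer (A' : Set B)) {v : B} (hvA : v ∈ A)
    (hv : IsOddInvolution U v)
    (H : ∀ T ∈ evenCommutant 𝕜 U A', ∀ T' ∈ evenCommutant 𝕜 U A, Commute T' T)
    {S : B} (hS : S ∈ {R ∈ centralizer (A' : Set B) | Commute U R})
    {z : B} (hz : z ∈ {R ∈ centralizer (A : Set B) | Commute U R}) : Commute z S := by
  set P := evenProj 𝕜 U
  have hPP : P * P = P := evenProj_mul_self hU
  have hPz : Commute P z := hz.2.evenProj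
  have hcorner : ∀ S₀ ∈ {R ∈ centralizer (A' : Set B) | Commute U R}, z * S₀ * P = S₀ * z * P := by
    rintro S₀ ⟨hS₀A', hUS₀⟩
    have hPS₀ : Commute P S₀ := hUS₀.evenProj
    have h := (H _ (evenProj_mul_mul_evenProj_mem hU hS₀A') _
      (evenProj_mul_mul_evenProj_mem hU hz.1)).eq
    rwa [hPz.eq, hPS₀.eq, mul_assoc z, mul_assoc S₀, hPP, mul_mul_mul_of_idempotent hPP hPS₀,
      mul_mul_mul_of_idempotent hPP hPz] at h
  have hvz : Commute v z := hz.1 v hvA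
  have hvSv : v * S * v ∈ {R ∈ centralizer (A' : Set B) | Commute U R} :=
    ⟨Set.mul_mem_centralizer (Set.mul_mem_centralizer (hAA' v hvA) hS.1) (hAA' v hvA),
      hv.commute_conj hS.2⟩
  have hvPv : v * P * v = 1 - P := hv.mul_evenProj_mul
  -- conjugating by `v` transfers `hcorner` from the range of `P` to that of `1 - P`
  have hQ : z * S * (1 - P) = S * z * (1 - P) :=
    calc z * S * (1 - P) = (v * z * v) * S * (v * P * v) := by
          rw [hvPv, hvz.eq, mul_assoc z v v, hv.1, mul_one]
      _ = v * (z * (v * S * v) * P) * v := by noncomm_ring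
      _ = v * ((v * S * v) * z * P) * v := by rw [hcorner _ hvSv]
      _ = (v * v) * S * (v * z) * P * v := by noncomm_ring
      _ = S * z * (1 - P) := by
          rw [hv.1, hvz.eq, ← hvPv]; noncomm_ring
  calc z * S = z * S * P + z * S * (1 - P) := by noncomm_ring
    _ = S * z * P + S * z * (1 - P) := by rw [hcorner S hS, hQ]
    _ = S * z := by noncomm_ring

theorem forall_commute_centralizer_iff_forall_commute_evenCommutant [NeZero (2 : 𝕜)]
    (hU : U * U = 1) {A A' : Subalgebra 𝕜 B} (hA : ∀ a ∈ A, U * a * U ∈ A)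
    (hA' : ∀ a ∈ A', U * a * U ∈ A') (hAA' : ∀ a ∈ A, a ∈ centralizer (A' : Set B))
    {v v' : B} (hvA : v ∈ A) (hv : IsOddInvolution U v) (hv'A' : v' ∈ A')
    (hv' : IsOddInvolution U v') :
    (∀ T ∈ centralizer (A' : Set B), ∀ T' ∈ centralizer (A : Set B), Commute T' T) ↔
      ∀ T ∈ evenCommutant 𝕜 U A', ∀ T' ∈ evenCommutant 𝕜 U A, Commute T' T := by
  constructor
  · intro H T hT T' hT'
    obtain ⟨S, hSA', hUS, rfl⟩ := exists_mem_centralizer_evenProj_mul_mul_eq hU hA' hv'A' hv' hT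
    obtain ⟨S', hS'A, hUS', rfl⟩ := exists_mem_centralizer_evenProj_mul_mul_eq hU hA hvA hv hT'
    exact (H S hSA' S' hS'A).compress hUS'.evenProj hUS.evenProj
  · intro H T hT T' hT'
    have hvv' : Commute v' v := hAA' v hvA v' hv'A'
    obtain ⟨S₀, hS₀, S₁, hS₁, rfl⟩ :=
      exists_eq_add_mul_of_mem_centralizer (𝕜 := 𝕜) hU hA' (hAA' v hvA) hv hT
    obtain ⟨z₀, hz₀, z₁, hz₁, rfl⟩ := exists_eq_add_mul_of_mem_centralizer (𝕜 := 𝕜) hU hA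
      (fun a ha => (hAA' a ha v' hv'A').symm) hv' hT'
    have hS : ∀ x, Commute x S₀ → Commute x S₁ → Commute x v → Commute x (S₀ + S₁ * v) :=
      fun x h₀ h₁ hxv => h₀.add_right (h₁.mul_right hxv)
    have hz : ∀ z ∈ {R ∈ centralizer (A : Set B) | Commute U R}, Commute z (S₀ + S₁ * v) :=
      fun z hz => hS z (commute_of_forall_commute_evenCommutant hU hAA' hvA hv H hS₀ hz)
        (commute_of_forall_commute_evenCommutant hU hAA' hvA hv H hS₁ hz) (hz.1 v hvA).symm
    exact (hz z₀ hz₀).add_left ((hz z₁ hz₁).mul_left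
      (hS v' (hS₀.1 v' hv'A') (hS₁.1 v' hv'A') hvv'))

theorem commute_of_mem_evenCommutant_of_centralizer_subset [NeZero (2 : 𝕜)] (hU : U * U = 1)
    {A : Subalgebra 𝕜 B} (hA : ∀ a ∈ A, U * a * U ∈ A) {v : B} (hvA : v ∈ A)
    (hv : IsOddInvolution U v) (hirr : centralizer (A : Set B) ⊆ range (algebraMap 𝕜 B))
    {T T' : B} (hT : T ∈ evenCommutant 𝕜 U A) (hT' : evenProj 𝕜 U * T' * evenProj 𝕜 U = T') :
    Commute T T' := by
  obtain ⟨S, hS, -, rfl⟩ := exists_mem_centralizer_evenProj_mul_mul_eq hU hA hvA hv hT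
  obtain ⟨c, rfl⟩ := hirr hS
  have hPT' : Commute (evenProj 𝕜 U) T' := by
    obtain ⟨hUT', hT'U⟩ := mul_eq_self_of_evenProj_mul_mul_eq hU hT'
    exact Commute.evenProj (by rw [Commute, SemiconjBy, hUT', hT'U])
  rw [← Algebra.commutes, mul_assoc, evenProj_mul_self hU]
  exact (Algebra.commute_algebraMap_left c T').mul_left hPT'

theorem forall_commute_centralizer_iff_forall_commute_evenCommutant_of_net [NeZero (2 : 𝕜)]
    (hU : U * U = 1) {I : Type*} [Nonempty I] (A : Set I → Subalgebra 𝕜 B)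
    (hA : ∀ X, ∀ a ∈ A X, U * a * U ∈ A X)
    (hodd : ∀ X : Set I, X.Nonempty → ∃ v ∈ A X, IsOddInvolution U v)
    (hloc : ∀ X, ∀ a ∈ A X, a ∈ centralizer (A Xᶜ : Set B))
    (hirr : centralizer (A univ : Set B) ⊆ range (algebraMap 𝕜 B)) (Λ : Set I) :
    (∀ T ∈ centralizer (A Λᶜ : Set B), ∀ T' ∈ centralizer (A Λ : Set B), Commute T' T) ↔
      ∀ T ∈ evenCommutant 𝕜 U (A Λᶜ), ∀ T' ∈ evenCommutant 𝕜 U (A Λ), Commute T' T := by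
  obtain ⟨v, hvA, hv⟩ := hodd univ univ_nonempty
  have hscalar : ∀ T ∈ centralizer (A univ : Set B), ∀ T', Commute T T' := by
    intro T hT T'
    obtain ⟨c, rfl⟩ := hirr hT
    exact Algebra.commute_algebraMap_left c T'
  rcases Λ.eq_empty_or_nonempty with rfl | hΛ
  · rw [compl_empty]
    exact iff_of_true (fun T hT T' _ => (hscalar T hT T').symm) fun T hT T' hT' =>
      (commute_of_mem_evenCommutant_of_centralizer_subset hU (hA univ) hvA hv hirr hT hT'.1).symm
  rcases Λᶜ.eq_empty_or_nonempty with hΛc | hΛc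
  · obtain rfl : Λ = univ := compl_empty_iff.mp hΛc
    exact iff_of_true (fun T _ T' hT' => hscalar T' hT' T) fun T hT T' hT' =>
      commute_of_mem_evenCommutant_of_centralizer_subset hU (hA univ) hvA hv hirr hT' hT.1
  obtain ⟨w, hwA, hw⟩ := hodd Λ hΛ
  obtain ⟨w', hw'A, hw'⟩ := hodd Λᶜ hΛc
  exact forall_commute_centralizer_iff_forall_commute_evenCommutant hU (hA Λ) (hA Λᶜ) (hloc Λ)
    hwA hw hw'A hw'

end ParityGrading

section GNS

open ContinuousLinearMap

theorem exists_isometry_comp_eq {𝕜 D E F : Type*} [NontriviallyNormedField 𝕜] [AddCommGroup D]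
    [Module 𝕜 D] [NormedAddCommGroup E] [NormedSpace 𝕜 E] [NormedAddCommGroup F] [NormedSpace 𝕜 F]
    [CompleteSpace F] (e : D →ₗ[𝕜] E) (f : D →ₗ[𝕜] F) (he : DenseRange e)
    (hf : ∀ x, ‖f x‖ = ‖e x‖) : ∃ J : E →L[𝕜] F, (∀ y, ‖J y‖ = ‖y‖) ∧ ∀ x, J (e x) = f x := by
  have hJ : ∀ x, f.extendOfNorm e (e x) = f x :=
    LinearMap.extendOfNorm_eq he ⟨1, fun x => by rw [hf, one_mul]⟩
  refine ⟨f.extendOfNorm e, fun y => ?_, hJ⟩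
  exact he.induction_on (p := fun y => ‖f.extendOfNorm e y‖ = ‖y‖) y
    (isClosed_eq (f.extendOfNorm e).continuous.norm continuous_norm) fun x => by rw [hJ, hf]

variable {A A' H H' : Type*} [Ring A] [StarRing A] [Algebra ℂ A] [Ring A'] [StarRing A']
  [Algebra ℂ A'] [NormedAddCommGroup H] [InnerProductSpace ℂ H] [CompleteSpace H]
  [NormedAddCommGroup H'] [InnerProductSpace ℂ H'] [CompleteSpace H']

lemma inner_apply_apply (π : A →⋆ₐ[ℂ] (H →L[ℂ] H)) (Ω : H) (a b : A) :
    ⟪π a Ω, π b Ω⟫ = ⟪Ω, π (star a * b) Ω⟫ := by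
  rw [map_mul, mul_apply_eq_comp, map_star, star_eq_adjoint, adjoint_inner_right]

theorem exists_intertwiner (π : A →⋆ₐ[ℂ] (H →L[ℂ] H)) (Ω : H) (π' : A' →⋆ₐ[ℂ] (H' →L[ℂ] H'))
    (Ω' : H') (α : A' →⋆ₐ[ℂ] A)
    (hcyc : Dense ((Submodule.span ℂ (range fun x => π' x Ω') : Submodule ℂ H') : Set H'))
    (hstate : ∀ x, ⟪Ω', π' x Ω'⟫ = ⟪Ω, π (α x) Ω⟫) :
    ∃ J : H' →L[ℂ] H, adjoint J ∘L J = 1 ∧ (∀ x, J (π' x Ω') = π (α x) Ω) ∧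
      ∀ x, J ∘L π' x = π (α x) ∘L J := by
  let e : A' →ₗ[ℂ] H' := (apply ℂ H' Ω').toLinearMap ∘ₗ π'.toAlgHom.toLinearMap
  let f : A' →ₗ[ℂ] H := (apply ℂ H Ω).toLinearMap ∘ₗ (π.comp α).toAlgHom.toLinearMap
  have he : DenseRange e := by
    rwa [DenseRange, ← LinearMap.coe_range, ← Submodule.span_eq (LinearMap.range e),
      LinearMap.coe_range]
  have hf : ∀ x, ‖f x‖ = ‖e x‖ := by
    intro x
    rw [← sq_eq_sq₀ (norm_nonneg _) (norm_nonneg _), norm_sq_eq_re_inner (𝕜 := ℂ),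
      norm_sq_eq_re_inner (𝕜 := ℂ)]
    change RCLike.re ⟪π (α x) Ω, π (α x) Ω⟫ = RCLike.re ⟪π' x Ω', π' x Ω'⟫
    rw [inner_apply_apply, inner_apply_apply, hstate]
    simp only [map_mul, map_star]
  obtain ⟨J, hJnorm, hJ⟩ := exists_isometry_comp_eq e f he hf
  have hJ' : ∀ x, J (π' x Ω') = π (α x) Ω := hJ
  refine ⟨J, (norm_map_iff_adjoint_comp_self J).mp hJnorm, hJ', fun x => ?_⟩
  refine ContinuousLinearMap.ext_on hcyc ?_
  rintro _ ⟨y, rfl⟩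
  change J (π' x (π' y Ω')) = π (α x) (J (π' y Ω'))
  rw [← mul_apply_eq_comp, ← map_mul, hJ', hJ', map_mul, map_mul, mul_apply_eq_comp]

theorem image_conj_centralizer_image {R E F : Type*} [Ring R] [StarRing R] [Algebra ℂ R]
    [NormedAddCommGroup E] [InnerProductSpace ℂ E] [CompleteSpace E]
    [NormedAddCommGroup F] [InnerProductSpace ℂ F] [CompleteSpace F]
    (ρ : R →⋆ₐ[ℂ] (E →L[ℂ] E)) (σ : R →⋆ₐ[ℂ] (F →L[ℂ] F)) (W : E →L[ℂ] F)
    (hW : adjoint W ∘L W = 1) (hWρ : ∀ x, W ∘L ρ x = σ x ∘L W) (s : Set R) :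
    (fun T => W ∘L T ∘L adjoint W) '' centralizer (ρ '' s) =
      {S | (W ∘L adjoint W) * S * (W ∘L adjoint W) = S} ∩ centralizer (σ '' s) := by
  have hW' : ∀ ξ, adjoint W (W ξ) = ξ := fun ξ => congr($hW ξ)
  have hWρ' : ∀ x ξ, W (ρ x ξ) = σ x (W ξ) := fun x ξ => congr($(hWρ x) ξ)
  have hρW' : ∀ x η, ρ x (adjoint W η) = adjoint W (σ x η) := by
    intro x η
    have h := congr(adjoint $(hWρ (star x)) η)
    simpa only [adjoint_comp, ← star_eq_adjoint, map_star, star_star, comp_apply] using h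
  ext S
  constructor
  · rintro ⟨T, hT, rfl⟩
    refine ⟨by ext ξ; simp [mul_apply_eq_comp, hW'], ?_⟩
    rintro _ ⟨x, hx, rfl⟩
    have hT' : ∀ ξ, ρ x (T ξ) = T (ρ x ξ) := fun ξ => congr($(hT (ρ x) ⟨x, hx, rfl⟩) ξ)
    ext ξ
    simp only [mul_apply_eq_comp, comp_apply, ← hWρ', hT', hρW']
  · rintro ⟨hS, hSσ⟩
    refine ⟨adjoint W ∘L S ∘L W, ?_, ?_⟩
    · rintro _ ⟨x, hx, rfl⟩
      have hS' : ∀ η, σ x (S η) = S (σ x η) := fun η => congr($(hSσ (σ x) ⟨x, hx, rfl⟩) η)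
      ext ξ
      simp only [mul_apply_eq_comp, comp_apply, hρW', hS', hWρ']
    · conv_rhs => rw [← hS]
      rfl

theorem exists_unitary_implementing (π : A →⋆ₐ[ℂ] (H →L[ℂ] H)) (Ω : H)
    (hcyc : Dense ((Submodule.span ℂ (range fun a => π a Ω) : Submodule ℂ H) : Set H))
    (Θ : A ≃⋆ₐ[ℂ] A) (hΘΘ : Function.Involutive Θ) (hΘ : ∀ a, ⟪Ω, π (Θ a) Ω⟫ = ⟪Ω, π a Ω⟫) :
    ∃ U : H →L[ℂ] H, U * U = 1 ∧ IsSelfAdjoint U ∧ U Ω = Ω ∧ ∀ a, U * π a * U = π (Θ a) := by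
  obtain ⟨U, hU, hUΩ, hUπ⟩ := exists_intertwiner π Ω π Ω Θ hcyc fun a => (hΘ a).symm
  have hUU : U * U = 1 := by
    refine ContinuousLinearMap.ext_on hcyc ?_
    rintro _ ⟨a, rfl⟩
    change U (U (π a Ω)) = π a Ω
    rw [hUΩ, hUΩ]
    exact congr(π $(hΘΘ a) Ω)
  refine ⟨U, hUU, ?_, by simpa using hUΩ 1, fun a => ?_⟩
  · calc star U = (star U * U) * U := by rw [mul_assoc, hUU, mul_one]
      _ = U := by rw [show star U * U = 1 from hU, one_mul]
  · rw [show U * π a = π (Θ a) * U from hUπ a, mul_assoc, hUU, mul_one]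

theorem exists_isometry_comp_adjoint_eq_evenProj {Aev Hp : Type*} [Ring Aev] [StarRing Aev]
    [Algebra ℂ Aev] [NormedAddCommGroup Hp] [InnerProductSpace ℂ Hp] [CompleteSpace Hp]
    (π : A →⋆ₐ[ℂ] (H →L[ℂ] H)) (Ω : H)
    (hcyc : Dense ((Submodule.span ℂ (range fun a => π a Ω) : Submodule ℂ H) : Set H))
    (πp : Aev →⋆ₐ[ℂ] (Hp →L[ℂ] Hp)) (Ωp : Hp)
    (hcycp : Dense ((Submodule.span ℂ (range fun x => πp x Ωp) : Submodule ℂ Hp) : Set Hp))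
    (Θ : A ≃⋆ₐ[ℂ] A) (hΘΘ : Function.Involutive Θ) (e : Aev →⋆ₐ[ℂ] A)
    (he : range e = {a | Θ a = a}) (hstate : ∀ x, ⟪Ωp, πp x Ωp⟫ = ⟪Ω, π (e x) Ω⟫)
    {U : H →L[ℂ] H} (hUsa : IsSelfAdjoint U) (hUΩ : U Ω = Ω)
    (hUπ : ∀ a, U * π a * U = π (Θ a)) :
    ∃ W : Hp →L[ℂ] H, adjoint W ∘L W = 1 ∧ W ∘L adjoint W = evenProj ℂ U ∧
      ∀ x, W ∘L πp x = π (e x) ∘L W := by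
  obtain ⟨W, hW, hWΩ, hWπ⟩ := exists_intertwiner π Ω πp Ωp e hcycp hstate
  have hPπ : ∀ a, evenProj ℂ U (π a Ω) = π ((2⁻¹ : ℂ) • (a + Θ a)) Ω := by
    intro a
    have hUa : U (π a Ω) = π (Θ a) Ω := by
      rw [← hUπ, mul_apply_eq_comp, mul_apply_eq_comp, hUΩ]
    rw [evenProj, map_smul, map_add, smul_apply, smul_apply, add_apply, add_apply,
      one_apply_eq_self, hUa]
  have hPW : evenProj ℂ U ∘L W = W := by
    refine ContinuousLinearMap.ext_on hcycp ?_
    rintro _ ⟨x, rfl⟩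
    have hx : Θ (e x) = e x := (he ▸ mem_range_self x : e x ∈ {a | Θ a = a})
    rw [comp_apply, hWΩ, hPπ, hx, inv_two_smul_add_self]
  have hQP : (W ∘L adjoint W) * evenProj ℂ U = evenProj ℂ U := by
    refine ContinuousLinearMap.ext_on hcyc ?_
    rintro _ ⟨a, rfl⟩
    obtain ⟨x, hx⟩ : (2⁻¹ : ℂ) • (a + Θ a) ∈ range e := by
      rw [he]
      change Θ _ = _
      rw [map_smul, map_add, hΘΘ, add_comm]
    change W (adjoint W (evenProj ℂ U (π a Ω))) = evenProj ℂ U (π a Ω)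
    rw [hPπ, ← hx, ← hWΩ, ← comp_apply (adjoint W), hW]
    rfl
  have hQsa : IsSelfAdjoint (W ∘L adjoint W) := by
    rw [IsSelfAdjoint, star_eq_adjoint, adjoint_comp, adjoint_adjoint]
  have hPsa : IsSelfAdjoint (evenProj ℂ U) := by
    rw [isSelfAdjoint_iff, evenProj, star_smul, ((IsSelfAdjoint.one _).add hUsa).star_eq,
      star_inv₀, star_ofNat]
  refine ⟨W, hW, (hPsa.eq_of_mul_eq hQsa hQP ?_).symm, hWπ⟩
  rw [mul_def, ← comp_assoc, hPW]

lemma image_inter_fixedPoints_eq [StarModule ℂ A] (π : A →⋆ₐ[ℂ] (H →L[ℂ] H)) {Θ : A ≃⋆ₐ[ℂ] A}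
    (hΘΘ : Function.Involutive Θ) {U : H →L[ℂ] H} (hUU : U * U = 1)
    (hUπ : ∀ a, U * π a * U = π (Θ a)) {L : StarSubalgebra ℂ A} (hL : ∀ a ∈ L, Θ a ∈ L) :
    π '' (L ∩ {a | Θ a = a}) = {x ∈ π '' L | Commute U x} := by
  have hUπ' : ∀ a, U * π a = π (Θ a) * U := fun a => by rw [← hUπ, mul_assoc, hUU, mul_one]
  ext x
  constructor
  · rintro ⟨a, ⟨haL, hΘa⟩, rfl⟩
    refine ⟨⟨a, haL, rfl⟩, ?_⟩
    rw [Commute, SemiconjBy, hUπ', hΘa]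
  · rintro ⟨⟨a, haL, rfl⟩, hUa⟩
    refine ⟨(2⁻¹ : ℂ) • (a + Θ a), ⟨L.smul_mem (L.add_mem haL (hL a haL)) _, ?_⟩, ?_⟩
    · change Θ _ = _
      rw [map_smul, map_add, hΘΘ, add_comm]
    · rw [map_smul, map_add, ← hUπ, hUa.eq, mul_assoc, hUU, mul_one, inv_two_smul_add_self]

theorem forall_commute_centralizer_iff_forall_commute_evenCommutant_of_isometry [StarModule ℂ A]
    {Aev Hp : Type*} [Ring Aev] [StarRing Aev] [Algebra ℂ Aev] [NormedAddCommGroup Hp]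
    [InnerProductSpace ℂ Hp] [CompleteSpace Hp]
    (π : A →⋆ₐ[ℂ] (H →L[ℂ] H)) (πp : Aev →⋆ₐ[ℂ] (Hp →L[ℂ] Hp)) {Θ : A ≃⋆ₐ[ℂ] A}
    (hΘΘ : Function.Involutive Θ) {e : Aev →⋆ₐ[ℂ] A} (he : range e = {a | Θ a = a})
    {U : H →L[ℂ] H} (hUU : U * U = 1) (hUπ : ∀ a, U * π a * U = π (Θ a)) {W : Hp →L[ℂ] H}
    (hW : adjoint W ∘L W = 1) (hWP : W ∘L adjoint W = evenProj ℂ U)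
    (hWπ : ∀ x, W ∘L πp x = π (e x) ∘L W) {L L' : StarSubalgebra ℂ A} (hL : ∀ a ∈ L, Θ a ∈ L)
    (hL' : ∀ a ∈ L', Θ a ∈ L') :
    (∀ T ∈ centralizer (πp '' (e ⁻¹' L')), ∀ T' ∈ centralizer (πp '' (e ⁻¹' L)), Commute T' T) ↔
      ∀ T ∈ evenCommutant ℂ U (π '' L'), ∀ T' ∈ evenCommutant ℂ U (π '' L), Commute T' T := by
  have hW' : ∀ ξ, adjoint W (W ξ) = ξ := fun ξ => congr($hW ξ)
  have himage : ∀ L : StarSubalgebra ℂ A, (∀ a ∈ L, Θ a ∈ L) →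
      (fun T => W ∘L T ∘L adjoint W) '' centralizer (πp '' (e ⁻¹' L)) =
        evenCommutant ℂ U (π '' L) := by
    intro L hL
    rw [image_conj_centralizer_image πp (π.comp e) W hW hWπ, hWP, StarAlgHom.coe_comp, image_comp,
      image_preimage_eq_inter_range, he, image_inter_fixedPoints_eq π hΘΘ hUU hUπ hL]
    rfl
  have hinj : Function.Injective fun T : Hp →L[ℂ] Hp => W ∘L T ∘L adjoint W := by
    intro S T h
    ext ξ
    simpa only [comp_apply, hW'] using congr(adjoint W ($h (W ξ)))
  rw [← forall_commute_image_iff hinj (fun S T => by ext ξ; simp [mul_apply_eq_comp, hW']),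
    himage L hL, himage L' hL']

end GNS

section SpinChain

variable {I M A : Type*} [Semiring M] [Algebra ℂ M] [Star M] [CStarAlgebra A]

def localAlgebra (ι : I → (M →⋆ₐ[ℂ] A)) (X : Set I) : StarSubalgebra ℂ A :=
  (StarAlgebra.adjoin ℂ (⋃ j ∈ X, range (ι j))).topologicalClosure

variable {ι : I → (M →⋆ₐ[ℂ] A)}

lemma apply_mem_localAlgebra {X : Set I} {j : I} (hj : j ∈ X) (m : M) :
    ι j m ∈ localAlgebra ι X :=
  StarSubalgebra.le_topologicalClosure _ (StarAlgebra.subset_adjoin ℂ _ (mem_biUnion hj ⟨m, rfl⟩))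

lemma isClosed_localAlgebra (X : Set I) : IsClosed (localAlgebra ι X : Set A) :=
  StarSubalgebra.isClosed_topologicalClosure _

lemma localAlgebra_le {X : Set I} {S : StarSubalgebra ℂ A} (hS : IsClosed (S : Set A))
    (h : ∀ j ∈ X, ∀ m, ι j m ∈ S) : localAlgebra ι X ≤ S :=
  StarSubalgebra.topologicalClosure_minimal
    (StarAlgebra.adjoin_le <| iUnion₂_subset fun j hj => range_subset_iff.2 (h j hj)) hS

lemma map_mem_localAlgebra {Θ : A ≃⋆ₐ[ℂ] A} {f : M → M} (hΘ : ∀ j m, Θ (ι j m) = ι j (f m))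
    {X : Set I} {a : A} (ha : a ∈ localAlgebra ι X) : Θ a ∈ localAlgebra ι X :=
  localAlgebra_le (S := (localAlgebra ι X).comap (Θ : A →⋆ₐ[ℂ] A))
    ((isClosed_localAlgebra (ι := ι) X).preimage (StarAlgEquiv.isometry Θ).continuous)
    (fun j hj m => by simpa [hΘ] using apply_mem_localAlgebra hj (f m)) ha

lemma involutive_of_localAlgebra_univ_eq_top {Θ : A ≃⋆ₐ[ℂ] A} {f : M → M}
    (hgen : localAlgebra ι univ = ⊤) (hΘ : ∀ j m, Θ (ι j m) = ι j (f m))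
    (hf : Function.Involutive f) : Function.Involutive Θ := by
  intro a
  have hΘc : Continuous Θ := (StarAlgEquiv.isometry Θ).continuous
  have h : localAlgebra ι univ ≤ StarAlgHom.equalizer ((Θ : A →⋆ₐ[ℂ] A).comp Θ) (.id ℂ A) :=
    localAlgebra_le (isClosed_eq (hΘc.comp hΘc) continuous_id) fun j _ m => by simp [hΘ, hf m]
  exact h (hgen ▸ StarSubalgebra.mem_top)

lemma localAlgebra_le_centralizer {X : Set I} {s : Set A}
    (h : ∀ j ∈ X, ∀ m, ∀ g ∈ s, Commute g (ι j m) ∧ Commute (star g) (ι j m)) :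
    localAlgebra ι X ≤ StarSubalgebra.centralizer ℂ s :=
  localAlgebra_le (by rw [StarSubalgebra.coe_centralizer]; exact isClosed_centralizer _)
    fun j hj m => (StarSubalgebra.mem_centralizer_iff ℂ).2 fun g hg => h j hj m g hg

theorem commute_of_mem_localAlgebra (hι : ∀ j k, j ≠ k → ∀ m m', Commute (ι j m) (ι k m'))
    {X Y : Set I} (hXY : Disjoint X Y) {a b : A} (ha : a ∈ localAlgebra ι X)
    (hb : b ∈ localAlgebra ι Y) : Commute a b := by
  have hY : localAlgebra ι Y ≤ StarSubalgebra.centralizer ℂ (⋃ j ∈ X, range (ι j)) := by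
    refine localAlgebra_le_centralizer fun k hk m' g hg => ?_
    obtain ⟨j, hj, m, rfl⟩ : ∃ j ∈ X, ∃ m, ι j m = g := by simpa using hg
    have hjk : j ≠ k := fun h => disjoint_left.1 hXY hj (h ▸ hk)
    exact ⟨hι j k hjk m m', by simpa only [← map_star] using hι j k hjk (star m) m'⟩
  have hX : localAlgebra ι X ≤ StarSubalgebra.centralizer ℂ (localAlgebra ι Y) := by
    refine localAlgebra_le_centralizer fun j hj m g hg => ?_
    have hcomm : ∀ g ∈ localAlgebra ι Y, Commute g (ι j m) := fun g hg =>
      (((StarSubalgebra.mem_centralizer_iff ℂ).1 (hY hg)) _ (mem_biUnion hj ⟨m, rfl⟩)).1.symm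
    exact ⟨hcomm g hg, hcomm _ (star_mem hg)⟩
  exact (((StarSubalgebra.mem_centralizer_iff ℂ).1 (hX ha)) b hb).1.symm

end SpinChain

def pauliX : Matrix (Fin 2) (Fin 2) ℂ := !![0, 1; 1, 0]

lemma pauliX_mul_self : pauliX * pauliX = 1 := by
  ext i j; fin_cases i <;> fin_cases j <;> simp [pauliX, Matrix.mul_apply, Fin.sum_univ_two]

lemma pauliZ_mul_self : pauliZ * pauliZ = 1 := by
  ext i j; fin_cases i <;> fin_cases j <;> simp [pauliZ, Matrix.mul_apply, Fin.sum_univ_two]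

lemma pauliZ_mul_pauliX_mul_pauliZ : pauliZ * pauliX * pauliZ = -pauliX := by
  ext i j; fin_cases i <;> fin_cases j <;> simp [pauliZ, pauliX, Matrix.mul_apply, Fin.sum_univ_two]

lemma involutive_pauliZ_conj : Function.Involutive fun m => pauliZ * m * pauliZ := by
  intro m
  change pauliZ * (pauliZ * m * pauliZ) * pauliZ = m
  rw [← mul_assoc, ← mul_assoc, pauliZ_mul_self, one_mul, mul_assoc, pauliZ_mul_self, mul_one]

theorem forall_commute_centralizer_iff_forall_commute_evenCommutant_spin {I A H : Type*}
    [Nonempty I] [CStarAlgebra A] [NormedAddCommGroup H] [InnerProductSpace ℂ H] [CompleteSpace H]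
    {ι : I → (Matrix (Fin 2) (Fin 2) ℂ →⋆ₐ[ℂ] A)}
    (hι : ∀ j k, j ≠ k → ∀ m m', Commute (ι j m) (ι k m')) (hgen : localAlgebra ι univ = ⊤)
    {Θ : A ≃⋆ₐ[ℂ] A} (hΘ : ∀ j m, Θ (ι j m) = ι j (pauliZ * m * pauliZ))
    (π : A →⋆ₐ[ℂ] (H →L[ℂ] H)) (hπ : ∀ T ∈ centralizer (range π), ∃ c : ℂ, T = c • 1)
    {U : H →L[ℂ] H} (hUU : U * U = 1) (hUπ : ∀ a, U * π a * U = π (Θ a)) (Λ : Set I) :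
    (∀ T ∈ centralizer (π '' localAlgebra ι Λᶜ), ∀ T' ∈ centralizer (π '' localAlgebra ι Λ),
        Commute T' T) ↔
      ∀ T ∈ evenCommutant ℂ U (π '' localAlgebra ι Λᶜ),
        ∀ T' ∈ evenCommutant ℂ U (π '' localAlgebra ι Λ), Commute T' T := by
  have hUπ' : ∀ a, U * π a = π (Θ a) * U := fun a => by rw [← hUπ, mul_assoc, hUU, mul_one]
  refine forall_commute_centralizer_iff_forall_commute_evenCommutant_of_net hUU
    (fun X => ((localAlgebra ι X).map π).toSubalgebra) ?_ ?_ ?_ ?_ Λ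
  · rintro X _ ⟨a, ha, rfl⟩
    exact ⟨Θ a, map_mem_localAlgebra hΘ ha, (hUπ a).symm⟩
  · rintro X ⟨j, hj⟩
    refine ⟨π (ι j pauliX), ⟨_, apply_mem_localAlgebra hj _, rfl⟩, ?_, ?_⟩
    · rw [← map_mul, ← map_mul, pauliX_mul_self, map_one, map_one]
    · rw [hUπ', hΘ, pauliZ_mul_pauliX_mul_pauliZ, map_neg, map_neg, neg_mul]
  · rintro X _ ⟨a, ha, rfl⟩ _ ⟨b, hb, rfl⟩
    exact ((commute_of_mem_localAlgebra hι disjoint_compl_right ha hb).map π).eq.symm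
  · intro T hT
    obtain ⟨c, rfl⟩ := hπ T (by simpa [hgen] using hT)
    exact ⟨c, Algebra.algebraMap_eq_smul_one c⟩

theorem haag_duality_iff_even_duality_spin_general
    -- the quasi-local C*-algebra of the spin chain, with one-site algebra `M₂(ℂ)`
    (A : Type) [CStarAlgebra A]
    (ι : ℤ → (Matrix (Fin 2) (Fin 2) ℂ →⋆ₐ[ℂ] A))
    (hιcomm : ∀ j k, j ≠ k → ∀ m m', Commute (ι j m) (ι k m'))
    -- the local algebras 𝔄_Λ
    (loc : Set ℤ → Set A)
    (hloc : ∀ Λ : Set ℤ, loc Λ =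
      ((StarAlgebra.adjoin ℂ (⋃ j ∈ Λ, Set.range (ι j))).topologicalClosure : Set A))
    (hgen : loc Set.univ = Set.univ)
    -- the parity automorphism Θ : σ_x,σ_y ↦ -σ_x,-σ_y, σ_z ↦ σ_z
    (Θ : A ≃⋆ₐ[ℂ] A)
    (hΘ : ∀ j m, Θ (ι j m) = ι j (pauliZ * m * pauliZ))
    -- the even part (𝔄)₊, presented as the range of an injective *-homomorphism
    (Aev : Type) [CStarAlgebra Aev] (e : Aev →⋆ₐ[ℂ] A)
    (heinj : Function.Injective e)
    (herange : Set.range (⇑e) = {a : A | Θ a = a})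
    -- a Θ-invariant state φ
    (φ : A →ₗ[ℂ] ℂ)
    (hφΘ : ∀ a, φ (Θ a) = φ a)
    -- the GNS representation of φ
    (H : Type) [NormedAddCommGroup H] [InnerProductSpace ℂ H] [CompleteSpace H]
    (π : A →⋆ₐ[ℂ] (H →L[ℂ] H)) (Ω : H)
    (hGNS : ∀ a, φ a = ⟪Ω, π a Ω⟫)
    (hcyc : Dense ((Submodule.span ℂ (Set.range fun a => π a Ω) : Submodule ℂ H) : Set H))
    -- φ is pure : the GNS representation is irreducible
    (hpure : ∀ T ∈ Set.centralizer (Set.range (⇑π)), ∃ c : ℂ, T = c • (1 : H →L[ℂ] H))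
    -- the GNS representation of the restriction φ₊ = φ ∘ e of φ to the even part
    (Hp : Type) [NormedAddCommGroup Hp] [InnerProductSpace ℂ Hp] [CompleteSpace Hp]
    (πp : Aev →⋆ₐ[ℂ] (Hp →L[ℂ] Hp)) (Ωp : Hp)
    (hGNSp : ∀ x, φ (e x) = ⟪Ωp, πp x Ωp⟫)
    (hcycp : Dense ((Submodule.span ℂ (Set.range fun x => πp x Ωp) : Submodule ℂ Hp) : Set Hp))
    -- a subset Λ of ℤ
    (Λ : Set ℤ) :
    -- Conclusion: Haag duality for Λ holds iff the even duality holds for φ₊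
    (Set.centralizer (Set.centralizer (⇑π '' loc Λ)) = Set.centralizer (⇑π '' loc Λᶜ)) ↔
      (Set.centralizer (Set.centralizer (⇑πp '' (⇑e ⁻¹' loc Λ))) =
        Set.centralizer (⇑πp '' (⇑e ⁻¹' loc Λᶜ))) := by
  obtain rfl : loc = fun X => (localAlgebra ι X : Set A) := funext hloc
  beta_reduce at hgen ⊢
  have hgen' : localAlgebra ι univ = ⊤ := SetLike.coe_injective hgen
  have hΘΘ := involutive_of_localAlgebra_univ_eq_top hgen' hΘ involutive_pauliZ_conj
  obtain ⟨U, hUU, hUsa, hUΩ, hUπ⟩ :=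
    exists_unitary_implementing π Ω hcyc Θ hΘΘ fun a => by rw [← hGNS, ← hGNS, hφΘ]
  obtain ⟨W, hW, hWP, hWπ⟩ := exists_isometry_comp_adjoint_eq_evenProj π Ω hcyc πp Ωp hcycp Θ
    hΘΘ e herange (fun x => by rw [← hGNSp, ← hGNS]) hUsa hUΩ hUπ
  have hlocal : ∀ {a b}, a ∈ localAlgebra ι Λ → b ∈ localAlgebra ι Λᶜ → Commute a b :=
    commute_of_mem_localAlgebra hιcomm disjoint_compl_right
  rw [centralizer_centralizer_eq_centralizer_iff, centralizer_centralizer_eq_centralizer_iff,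
    forall_commute_centralizer_iff_forall_commute_evenCommutant_of_isometry π πp hΘΘ herange hUU
      hUπ hW hWP hWπ (fun _ => map_mem_localAlgebra hΘ) (fun _ => map_mem_localAlgebra hΘ)]
  · exact forall_commute_centralizer_iff_forall_commute_evenCommutant_spin hιcomm hgen' hΘ π hpure
      hUU hUπ Λ
  · rintro _ ⟨y, hy, rfl⟩ _ ⟨x, hx, rfl⟩
    rw [← map_mul, ← map_mul]
    exact congr_arg πp (heinj (by rw [map_mul, map_mul, (hlocal hx hy).eq]))
  · rintro _ ⟨b, hb, rfl⟩ _ ⟨a, ha, rfl⟩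
    exact ((hlocal ha hb).map π).eq

theorem haag_duality_iff_even_duality_spin
    -- the quasi-local C*-algebra of the spin chain, with one-site algebra `M₂(ℂ)`
    (A : Type) [CStarAlgebra A]
    (ι : ℤ → (Matrix (Fin 2) (Fin 2) ℂ →⋆ₐ[ℂ] A))
    (hιinj : ∀ j, Function.Injective (ι j))
    (hιcomm : ∀ j k, j ≠ k → ∀ m m', Commute (ι j m) (ι k m'))
    -- the local algebras 𝔄_Λ
    (loc : Set ℤ → Set A)
    (hloc : ∀ Λ : Set ℤ, loc Λ =
      ((StarAlgebra.adjoin ℂ (⋃ j ∈ Λ, Set.range (ι j))).topologicalClosure : Set A))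
    (hgen : loc Set.univ = Set.univ)
    -- the parity automorphism Θ : σ_x,σ_y ↦ -σ_x,-σ_y, σ_z ↦ σ_z
    (Θ : A ≃⋆ₐ[ℂ] A)
    (hΘ : ∀ j m, Θ (ι j m) = ι j (pauliZ * m * pauliZ))
    -- the even part (𝔄)₊, presented as the range of an injective *-homomorphism
    (Aev : Type) [CStarAlgebra Aev] (e : Aev →⋆ₐ[ℂ] A)
    (heinj : Function.Injective e)
    (herange : Set.range (⇑e) = {a : A | Θ a = a})
    -- a Θ-invariant state φ
    (φ : A →ₗ[ℂ] ℂ)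
    (hφpos : ∀ a, 0 ≤ φ (star a * a))
    (hφone : φ 1 = 1)
    (hφΘ : ∀ a, φ (Θ a) = φ a)
    -- the GNS representation of φ
    (H : Type) [NormedAddCommGroup H] [InnerProductSpace ℂ H] [CompleteSpace H]
    (π : A →⋆ₐ[ℂ] (H →L[ℂ] H)) (Ω : H)
    (hGNS : ∀ a, φ a = ⟪Ω, π a Ω⟫)
    (hcyc : Dense ((Submodule.span ℂ (Set.range fun a => π a Ω) : Submodule ℂ H) : Set H))
    -- φ is pure : the GNS representation is irreducible
    (hpure : ∀ T ∈ Set.centralizer (Set.range (⇑π)), ∃ c : ℂ, T = c • (1 : H →L[ℂ] H))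
    -- the GNS representation of the restriction φ₊ = φ ∘ e of φ to the even part
    (Hp : Type) [NormedAddCommGroup Hp] [InnerProductSpace ℂ Hp] [CompleteSpace Hp]
    (πp : Aev →⋆ₐ[ℂ] (Hp →L[ℂ] Hp)) (Ωp : Hp)
    (hGNSp : ∀ x, φ (e x) = ⟪Ωp, πp x Ωp⟫)
    (hcycp : Dense ((Submodule.span ℂ (Set.range fun x => πp x Ωp) : Submodule ℂ Hp) : Set Hp))
    -- a subset Λ of ℤ
    (Λ : Set ℤ) :
    -- Conclusion: Haag duality for Λ holds iff the even duality holds for φ₊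
    (Set.centralizer (Set.centralizer (⇑π '' loc Λ)) = Set.centralizer (⇑π '' loc Λᶜ)) ↔
      (Set.centralizer (Set.centralizer (⇑πp '' (⇑e ⁻¹' loc Λ))) =
        Set.centralizer (⇑πp '' (⇑e ⁻¹' loc Λᶜ))) :=
  haag_duality_iff_even_duality_spin_general A ι hιcomm loc hloc hgen Θ hΘ Aev e heinj herange φ hφΘ
    H π Ω hGNS hcyc hpure Hp πp Ωp hGNSp hcycp Λ
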